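/- Let (p, χ) be a comprehension category with a cleavage for p. Define K : E → E on objects by choosing a cartesian lift of χ_E : X_E → pE, with counit ε_E the chosen cartesian lift itself. Then K extends to a copointed endofunctor on E with ε : K ⇒ Id natural, every ε_E is p-cartesian, and for every p-cartesian f the image under p of the naturality square of ε at f is a pullback in B; consequently (K, ε) underlies a weakening and contraction comonad on p. -/

import Mathlib

open CategoryTheory

/-- An arrow `f : X ⟶ Y` in `E` is `p`-cartesian if every `g : Z ⟶ Y` whose image factors
through `p f` lifts uniquely. -/
def IsCartesian {E B : Type*} [Category E] [Category B] (p : E ⥤ B)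
    {X Y : E} (f : X ⟶ Y) : Prop :=
  ∀ ⦃Z : E⦄ (g : Z ⟶ Y) (h : p.obj Z ⟶ p.obj X),
    h ≫ p.map f = p.map g → ∃! l : Z ⟶ X, p.map l = h ∧ l ≫ f = g

/-- A functor `p : E ⥤ B` is a (Grothendieck) fibration if every arrow into the image of an
object of `E` has a cartesian lift. -/
def IsFibration {E B : Type*} [Category E] [Category B] (p : E ⥤ B) : Prop :=
  ∀ (Y : E) (X : B) (φ : X ⟶ p.obj Y),
    ∃ (Z : E) (f : Z ⟶ Y) (e : p.obj Z = X),
      IsCartesian p f ∧ p.map f = eqToHom e ≫ φ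

/-- A comprehension category (without terminal object): a fibration `p : E ⥤ B` together with a
functor `χ : E ⥤ B²` over `B` (i.e. `cod ∘ χ = p`) mapping `p`-cartesian arrows to pullback
squares in `B`. -/
structure CompCat (B E : Type*) [Category B] [Category E] where
  p : E ⥤ B
  fib : IsFibration p
  χ : E ⥤ Arrow B
  over_obj : ∀ X : E, (χ.obj X).right = p.obj X
  over_map : ∀ {X Y : E} (f : X ⟶ Y),
    (χ.map f).right = eqToHom (over_obj X) ≫ p.map f ≫ eqToHom (over_obj Y).symm
  χ_cart : ∀ {X Y : E} (f : X ⟶ Y), IsCartesian p f →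
    IsPullback (χ.map f).left (χ.obj X).hom (χ.obj Y).hom (χ.map f).right

/-! The counit `ε_X` is a chosen cartesian lift of `χ_X`, and `K` acts on arrows through the
universal property of these lifts; hence `p` sends the naturality square of `ε` at `f` to the
square `χ f` (up to `p (K X) = X_X`), which is a pullback when `f` is cartesian.
The pullback square at `f = ε_X` has a diagonal `p (K X) ⟶ p (K (K X))`, and `δ_X` is the lift of
`𝟙 (K X)` through the cartesian arrow `ε_{K X}` over that diagonal. The comonad laws then follow
from uniqueness of lifts through cartesian arrows and of maps into pullbacks. -/

section

variable {E B : Type*} [Category E] [Category B] {p : E ⥤ B}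

namespace IsCartesian

variable {X Y Z : E} {f : X ⟶ Y}

lemma hom_ext (hf : IsCartesian p f) {l₁ l₂ : Z ⟶ X} (hp : p.map l₁ = p.map l₂)
    (hc : l₁ ≫ f = l₂ ≫ f) : l₁ = l₂ := by
  obtain ⟨l, -, hl⟩ := hf (l₂ ≫ f) (p.map l₂) (p.map_comp _ _).symm
  rw [hl l₁ ⟨hp, hc⟩, hl l₂ ⟨rfl, rfl⟩]

noncomputable def lift (hf : IsCartesian p f) (g : Z ⟶ Y) (h : p.obj Z ⟶ p.obj X)
    (w : h ≫ p.map f = p.map g) : Z ⟶ X :=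
  (hf g h w).exists.choose

@[simp]
lemma map_lift (hf : IsCartesian p f) (g : Z ⟶ Y) (h : p.obj Z ⟶ p.obj X)
    (w : h ≫ p.map f = p.map g) : p.map (hf.lift g h w) = h :=
  (hf g h w).exists.choose_spec.1

@[simp]
lemma lift_fac (hf : IsCartesian p f) (g : Z ⟶ Y) (h : p.obj Z ⟶ p.obj X)
    (w : h ≫ p.map f = p.map g) : hf.lift g h w ≫ f = g :=
  (hf g h w).exists.choose_spec.2

@[simp]
lemma lift_fac_assoc (hf : IsCartesian p f) (g : Z ⟶ Y) (h : p.obj Z ⟶ p.obj X)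
    (w : h ≫ p.map f = p.map g) {W : E} (k : Y ⟶ W) : hf.lift g h w ≫ f ≫ k = g ≫ k := by
  rw [← Category.assoc, lift_fac]

end IsCartesian

namespace IsFibration

variable (hp : IsFibration p)

section

variable {X : B} {Y : E} (φ : X ⟶ p.obj Y)

noncomputable def liftObj : E := (hp Y X φ).choose

noncomputable def liftHom : hp.liftObj φ ⟶ Y := (hp Y X φ).choose_spec.choose

lemma obj_liftObj : p.obj (hp.liftObj φ) = X := (hp Y X φ).choose_spec.choose_spec.choose

lemma isCartesian_liftHom : IsCartesian p (hp.liftHom φ) :=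
  (hp Y X φ).choose_spec.choose_spec.choose_spec.1

lemma map_liftHom : p.map (hp.liftHom φ) = eqToHom (hp.obj_liftObj φ) ≫ φ :=
  (hp Y X φ).choose_spec.choose_spec.choose_spec.2

end

variable {F : E ⥤ B} (α : F ⟶ p)

noncomputable def liftFunctor : E ⥤ E where
  obj X := hp.liftObj (α.app X)
  map {X Y} f := (hp.isCartesian_liftHom (α.app Y)).lift (hp.liftHom (α.app X) ≫ f)
    (eqToHom (hp.obj_liftObj (α.app X)) ≫ F.map f ≫ eqToHom (hp.obj_liftObj (α.app Y)).symm)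
    (by simp [map_liftHom])
  map_id X := (hp.isCartesian_liftHom (α.app X)).hom_ext (by simp) (by simp)
  map_comp f g := (hp.isCartesian_liftHom _).hom_ext (by simp) (by simp)

noncomputable def liftCounit : hp.liftFunctor α ⟶ 𝟭 E where
  app X := hp.liftHom (α.app X)
  naturality _ _ _ := by simp [liftFunctor]

lemma obj_liftFunctor_obj (X : E) : p.obj ((hp.liftFunctor α).obj X) = F.obj X :=
  hp.obj_liftObj _

lemma isCartesian_liftCounit_app (X : E) : IsCartesian p ((hp.liftCounit α).app X) :=
  hp.isCartesian_liftHom _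

lemma map_liftCounit_app (X : E) :
    p.map ((hp.liftCounit α).app X) = eqToHom (hp.obj_liftFunctor_obj α X) ≫ α.app X :=
  hp.map_liftHom _

lemma map_liftFunctor_map {X Y : E} (f : X ⟶ Y) :
    p.map ((hp.liftFunctor α).map f) =
      eqToHom (hp.obj_liftFunctor_obj α X) ≫ F.map f ≫ eqToHom (hp.obj_liftFunctor_obj α Y).symm := by
  simp [liftFunctor]

lemma isPullback_map_liftCounit_naturality {X Y : E} {f : X ⟶ Y}
    (h : IsPullback (α.app X) (F.map f) (p.map f) (α.app Y)) :
    IsPullback (p.map ((hp.liftCounit α).app X)) (p.map ((hp.liftFunctor α).map f)) (p.map f)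
      (p.map ((hp.liftCounit α).app Y)) :=
  h.of_iso (eqToIso (hp.obj_liftFunctor_obj α X).symm) (Iso.refl _)
    (eqToIso (hp.obj_liftFunctor_obj α Y).symm) (Iso.refl _)
    (by simp [map_liftCounit_app]) (by simp [map_liftFunctor_map]) (by simp)
    (by simp [map_liftCounit_app])

end IsFibration

section Comultiplication

variable {K : E ⥤ E} {ε : K ⟶ 𝟭 E}

noncomputable def counitDiagonal
    (hpb : ∀ X, IsPullback (p.map (ε.app (K.obj X))) (p.map (K.map (ε.app X)))
      (p.map (ε.app X)) (p.map (ε.app X))) (X : E) :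
    p.obj (K.obj X) ⟶ p.obj (K.obj (K.obj X)) :=
  (hpb X).lift (𝟙 _) (𝟙 _) rfl

variable (hpb : ∀ X, IsPullback (p.map (ε.app (K.obj X))) (p.map (K.map (ε.app X)))
  (p.map (ε.app X)) (p.map (ε.app X)))

@[simp]
lemma counitDiagonal_comp_map_counit_app (X : E) :
    counitDiagonal hpb X ≫ p.map (ε.app (K.obj X)) = 𝟙 _ :=
  (hpb X).lift_fst _ _ _

@[simp]
lemma counitDiagonal_comp_map_map_counit_app (X : E) :
    counitDiagonal hpb X ≫ p.map (K.map (ε.app X)) = 𝟙 _ :=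
  (hpb X).lift_snd _ _ _

lemma map_map_comp_counitDiagonal {X Y : E} (f : X ⟶ Y) :
    p.map (K.map f) ≫ counitDiagonal hpb Y = counitDiagonal hpb X ≫ p.map (K.map (K.map f)) := by
  refine (hpb Y).hom_ext ?_ ?_
  · rw [Category.assoc, counitDiagonal_comp_map_counit_app, Category.comp_id, Category.assoc,
      ← p.map_comp, ε.naturality, Functor.id_map, p.map_comp,
      reassoc_of% (counitDiagonal_comp_map_counit_app hpb X)]
  · rw [Category.assoc, counitDiagonal_comp_map_map_counit_app, Category.comp_id, Category.assoc,
      ← p.map_comp, ← K.map_comp, ε.naturality, Functor.id_map, K.map_comp, p.map_comp,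
      reassoc_of% (counitDiagonal_comp_map_map_counit_app hpb X)]

variable (hε : ∀ X, IsCartesian p (ε.app X))

noncomputable def comultOfCartesianCounit : K ⟶ K ⋙ K where
  app X := (hε (K.obj X)).lift (𝟙 _) (counitDiagonal hpb X) (by simp)
  naturality X Y f := (hε (K.obj Y)).hom_ext
    (by simpa using map_map_comp_counitDiagonal hpb f) (by simp)

@[simp]
lemma map_comultOfCartesianCounit_app (X : E) :
    p.map ((comultOfCartesianCounit hpb hε).app X) = counitDiagonal hpb X :=
  (hε (K.obj X)).map_lift _ _ (by simp)

@[simp]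
lemma comultOfCartesianCounit_app_comp_counit_app (X : E) :
    (comultOfCartesianCounit hpb hε).app X ≫ ε.app (K.obj X) = 𝟙 (K.obj X) :=
  (hε (K.obj X)).lift_fac _ _ (by simp)

lemma comultOfCartesianCounit_app_comp_map_counit_app (X : E) :
    (comultOfCartesianCounit hpb hε).app X ≫ K.map (ε.app X) = 𝟙 (K.obj X) :=
  (hε X).hom_ext (by simp)
    (by simp [reassoc_of% (comultOfCartesianCounit_app_comp_counit_app hpb hε X)])

lemma counitDiagonal_comp_map_map_comultOfCartesianCounit_app (X : E) :
    counitDiagonal hpb X ≫ p.map (K.map ((comultOfCartesianCounit hpb hε).app X)) =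
      counitDiagonal hpb X ≫ counitDiagonal hpb (K.obj X) := by
  set δ := comultOfCartesianCounit hpb hε
  refine (hpb (K.obj X)).hom_ext ?_ ?_
  · have hδ : K.map (δ.app X) ≫ ε.app (K.obj (K.obj X)) = ε.app (K.obj X) ≫ δ.app X :=
      ε.naturality _
    rw [Category.assoc, ← p.map_comp, hδ, p.map_comp, map_comultOfCartesianCounit_app,
      reassoc_of% (counitDiagonal_comp_map_counit_app hpb X), Category.assoc,
      counitDiagonal_comp_map_counit_app, Category.comp_id]
  · rw [Category.assoc, ← p.map_comp, ← K.map_comp, comultOfCartesianCounit_app_comp_counit_app,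
      K.map_id, p.map_id, Category.assoc, counitDiagonal_comp_map_map_counit_app]

lemma comultOfCartesianCounit_app_comp_map_comultOfCartesianCounit_app (X : E) :
    (comultOfCartesianCounit hpb hε).app X ≫ K.map ((comultOfCartesianCounit hpb hε).app X) =
      (comultOfCartesianCounit hpb hε).app X ≫ (comultOfCartesianCounit hpb hε).app (K.obj X) :=
  (hε (K.obj (K.obj X))).hom_ext
    (by simpa using counitDiagonal_comp_map_map_comultOfCartesianCounit_app hpb hε X)
    (by simp [reassoc_of% (comultOfCartesianCounit_app_comp_counit_app hpb hε X)])

end Comultiplication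

namespace CompCat

variable (CC : CompCat B E)

/-- An `abbrev` with explicit fields rather than `CC.χ ⋙ Arrow.leftFunc`, so that `CC.dom.obj X`
is reducibly `(CC.χ.obj X).left` and `simp` can compose `CC.proj.app X` with `(CC.χ.obj X).hom`. -/
abbrev dom : E ⥤ B where
  obj X := (CC.χ.obj X).left
  map f := (CC.χ.map f).left

@[simps]
def proj : CC.dom ⟶ CC.p where
  app X := (CC.χ.obj X).hom ≫ eqToHom (CC.over_obj X)
  naturality X Y f := by simp [CC.over_map]

lemma isPullback_proj_naturality {X Y : E} {f : X ⟶ Y} (hf : IsCartesian CC.p f) :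
    IsPullback (CC.proj.app X) (CC.χ.map f).left (CC.p.map f) (CC.proj.app Y) :=
  (CC.χ_cart f hf).flip.of_iso (Iso.refl _) (eqToIso (CC.over_obj X)) (Iso.refl _)
    (eqToIso (CC.over_obj Y)) (Category.id_comp _).symm
    ((Category.comp_id _).trans (Category.id_comp _).symm) (by simp [CC.over_map])
    (Category.id_comp _).symm

end CompCat

end

/-- given a comprehension category `(p, χ)` with a cleavage for `p`, choosing for
each `E` a cartesian lift of the comprehension `χ_E` yields a copointed endofunctor `(K, ε)` on
`E` with each `ε_E` a `p`-cartesian lift of `χ_E`, whose counit-naturality squares at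
`p`-cartesian arrows are sent by `p` to pullbacks; consequently `(K, ε)` underlies a weakening
and contraction comonad on `p` (there is a comultiplication `δ` satisfying the comonad laws). -/
theorem compcat_gives_wccmd {B E : Type*} [Category B] [Category E] (CC : CompCat B E) :
    ∃ (K : E ⥤ E) (ε : K ⟶ 𝟭 E),
      (∀ X : E, IsCartesian CC.p (ε.app X)) ∧
      (∀ X : E, ∃ e : CC.p.obj (K.obj X) = (CC.χ.obj X).left,
          CC.p.map (ε.app X) ≫ eqToHom (CC.over_obj X).symm = eqToHom e ≫ (CC.χ.obj X).hom) ∧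
      (∀ {X Y : E} (f : X ⟶ Y), IsCartesian CC.p f →
        IsPullback (CC.p.map (ε.app X)) (CC.p.map (K.map f)) (CC.p.map f)
          (CC.p.map (ε.app Y))) ∧
      ∃ δ : K ⟶ K ⋙ K,
        (∀ X : E, δ.app X ≫ ε.app (K.obj X) = 𝟙 (K.obj X)) ∧
        (∀ X : E, δ.app X ≫ K.map (ε.app X) = 𝟙 (K.obj X)) ∧
        (∀ X : E, δ.app X ≫ K.map (δ.app X) = δ.app X ≫ δ.app (K.obj X)) := by
  let K := CC.fib.liftFunctor CC.proj
  let ε := CC.fib.liftCounit CC.proj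
  have hε : ∀ X, IsCartesian CC.p (ε.app X) := CC.fib.isCartesian_liftCounit_app CC.proj
  have hpb : ∀ {X Y : E} (f : X ⟶ Y), IsCartesian CC.p f →
      IsPullback (CC.p.map (ε.app X)) (CC.p.map (K.map f)) (CC.p.map f) (CC.p.map (ε.app Y)) :=
    fun _ hf => CC.fib.isPullback_map_liftCounit_naturality CC.proj (CC.isPullback_proj_naturality hf)
  have hpbε := fun X => hpb (ε.app X) (hε X)
  refine ⟨K, ε, hε, fun X => ⟨CC.fib.obj_liftFunctor_obj CC.proj X, ?_⟩, hpb,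
    comultOfCartesianCounit hpbε hε, comultOfCartesianCounit_app_comp_counit_app hpbε hε,
    comultOfCartesianCounit_app_comp_map_counit_app hpbε hε,
    comultOfCartesianCounit_app_comp_map_comultOfCartesianCounit_app hpbε hε⟩
  simp [ε, IsFibration.map_liftCounit_app]
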